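/- For every μ ∈ ℝ and σ > 0, the Weyl 1-form φ = (1/2)·C_{ijk}g^{jk}dθ^i of the univariate Gaussian family in the coordinates (μ, σ²) has μ-component (1/2)·[(∫ s₁³ φ_{μ,σ²} dx)·σ² + (∫ s₁ s₂² φ_{μ,σ²} dx)·2σ⁴] = 0 and σ²-component (1/2)·[(∫ s₂ s₁² φ_{μ,σ²} dx)·σ² + (∫ s₂³ φ_{μ,σ²} dx)·2σ⁴] = 3/(2σ²), where σ² and 2σ⁴ are the diagonal entries of the inverse Fisher metric of the family. -/

import Mathlib

open MeasureTheory Real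

/-- The density of the univariate Gaussian distribution N(μ,σ²). -/
noncomputable def gaussPdf (μ σ x : ℝ) : ℝ :=
  1 / (Real.sqrt (2 * Real.pi) * σ) * Real.exp (-(x - μ) ^ 2 / (2 * σ ^ 2))

/-- The score component s₁ = ∂_μ l of the univariate Gaussian log-likelihood. -/
noncomputable def score1 (μ σ x : ℝ) : ℝ := (x - μ) / σ ^ 2

/-- The score component s₂ = ∂_{σ²} l of the univariate Gaussian log-likelihood. -/
noncomputable def score2 (μ σ x : ℝ) : ℝ := (x - μ) ^ 2 / (2 * σ ^ 4) - 1 / (2 * σ ^ 2)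

/-! Writing `p = gaussPdf μ σ`, so that `p' = -(x - μ) p / σ²`, integrating
`d/dx [(x - μ)^(n+1) p] = ((n + 1) (x - μ)^n - (x - μ)^(n+2) / σ²) p` over `ℝ` gives the
recursion `m (n+2) = (n + 1) σ² m n` for the central moments `m n` of `N(μ, σ²)`, with
`m 0 = 1` and `m 1 = 0`. So the odd moments vanish and `m 2 = σ²`, `m 4 = 3σ⁴`, `m 6 = 15σ⁶`.
Each product of scores is a polynomial in `x - μ`, so the four integrals are linear combinations
of these moments. -/

open ProbabilityTheory

noncomputable def gaussCentralMoment (μ σ : ℝ) (n : ℕ) : ℝ :=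
  ∫ x, (x - μ) ^ n * gaussPdf μ σ x

section

variable {μ σ : ℝ}

lemma gaussPdf_eq_gaussianPDFReal (hσ : 0 < σ) :
    gaussPdf μ σ = gaussianPDFReal μ (σ ^ 2).toNNReal := by
  ext x
  rw [gaussianPDFReal, Real.coe_toNNReal _ (sq_nonneg σ), Real.sqrt_mul' _ (sq_nonneg σ),
    Real.sqrt_sq hσ.le, gaussPdf, one_div]

lemma integrable_pow_sub_mul_gaussPdf (hσ : σ ≠ 0) (n : ℕ) :
    Integrable fun x => (x - μ) ^ n * gaussPdf μ σ x := by
  have hb : 0 < (2 * σ ^ 2)⁻¹ := by positivity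
  have hn : (-1 : ℝ) < n := by linarith [n.cast_nonneg (α := ℝ)]
  refine (((integrable_rpow_mul_exp_neg_mul_sq hb hn).comp_sub_right μ).const_mul
    (√(2 * π) * σ)⁻¹).congr (ae_of_all _ fun x => ?_)
  simp only [gaussPdf, Real.rpow_natCast]
  ring_nf

lemma hasDerivAt_gaussPdf (x : ℝ) :
    HasDerivAt (gaussPdf μ σ) (-((x - μ) * gaussPdf μ σ x) / σ ^ 2) x := by
  have h : HasDerivAt (fun y => -(y - μ) ^ 2 / (2 * σ ^ 2)) (-(2 * (x - μ)) / (2 * σ ^ 2)) x := by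
    simpa using (((hasDerivAt_id' x).sub_const μ).fun_pow 2).fun_neg.div_const (2 * σ ^ 2)
  refine (h.exp.const_mul (1 / (√(2 * π) * σ))).congr_deriv ?_
  unfold gaussPdf
  field_simp

lemma gaussCentralMoment_zero (hσ : 0 < σ) : gaussCentralMoment μ σ 0 = 1 := by
  simp [gaussCentralMoment, gaussPdf_eq_gaussianPDFReal hσ, integral_gaussianPDFReal_eq_one,
    hσ.ne']

lemma gaussCentralMoment_one (hσ : σ ≠ 0) : gaussCentralMoment μ σ 1 = 0 := by
  have hint : Integrable fun x => (x - μ) * gaussPdf μ σ x := by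
    simpa using integrable_pow_sub_mul_gaussPdf (μ := μ) hσ 1
  have h := integral_eq_zero_of_hasDerivAt_of_integrable hasDerivAt_gaussPdf
    (hint.neg.div_const _) (by simpa using integrable_pow_sub_mul_gaussPdf (μ := μ) hσ 0)
  rw [integral_div, integral_neg, div_eq_zero_iff, neg_eq_zero] at h
  simpa [gaussCentralMoment, hσ] using h

lemma gaussCentralMoment_add_two (hσ : σ ≠ 0) (n : ℕ) :
    gaussCentralMoment μ σ (n + 2) = (n + 1) * σ ^ 2 * gaussCentralMoment μ σ n := by
  have hint := integrable_pow_sub_mul_gaussPdf (μ := μ) hσ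
  have hderiv : ∀ x, HasDerivAt (fun x => (x - μ) ^ (n + 1) * gaussPdf μ σ x)
      ((n + 1) * ((x - μ) ^ n * gaussPdf μ σ x)
        - (σ ^ 2)⁻¹ * ((x - μ) ^ (n + 2) * gaussPdf μ σ x)) x := by
    intro x
    refine ((((hasDerivAt_id' x).sub_const μ).fun_pow (n + 1)).mul
      (hasDerivAt_gaussPdf x)).congr_deriv ?_
    push_cast
    field_simp
    ring
  have h := integral_eq_zero_of_hasDerivAt_of_integrable hderiv
    (((hint n).const_mul _).sub ((hint _).const_mul _)) (hint (n + 1))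
  rw [integral_sub ((hint n).const_mul _) ((hint _).const_mul _), integral_const_mul,
    integral_const_mul, sub_eq_zero] at h
  unfold gaussCentralMoment
  field_simp at h ⊢
  linarith

lemma gaussCentralMoment_two (hσ : 0 < σ) : gaussCentralMoment μ σ 2 = σ ^ 2 := by
  simpa [gaussCentralMoment_zero hσ] using gaussCentralMoment_add_two (μ := μ) hσ.ne' 0

lemma gaussCentralMoment_three (hσ : σ ≠ 0) : gaussCentralMoment μ σ 3 = 0 := by
  rw [gaussCentralMoment_add_two hσ 1, gaussCentralMoment_one hσ, mul_zero]

lemma gaussCentralMoment_four (hσ : 0 < σ) : gaussCentralMoment μ σ 4 = 3 * σ ^ 4 := by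
  rw [gaussCentralMoment_add_two hσ.ne' 2, gaussCentralMoment_two hσ]
  ring

lemma gaussCentralMoment_five (hσ : σ ≠ 0) : gaussCentralMoment μ σ 5 = 0 := by
  rw [gaussCentralMoment_add_two hσ 3, gaussCentralMoment_three hσ, mul_zero]

lemma gaussCentralMoment_six (hσ : 0 < σ) : gaussCentralMoment μ σ 6 = 15 * σ ^ 6 := by
  rw [gaussCentralMoment_add_two hσ.ne' 4, gaussCentralMoment_four hσ]
  ring

lemma integral_sum_mul_gaussPdf (hσ : σ ≠ 0) {N : ℕ} (c : Fin N → ℝ) :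
    ∫ x, (∑ i, c i * (x - μ) ^ (i : ℕ)) * gaussPdf μ σ x
      = ∑ i, c i * gaussCentralMoment μ σ i := by
  simp_rw [Finset.sum_mul, mul_assoc]
  rw [integral_finsetSum _ fun (i : Fin N) _ =>
    (integrable_pow_sub_mul_gaussPdf hσ (i : ℕ)).const_mul (c i)]
  simp_rw [integral_const_mul, gaussCentralMoment]

lemma integral_score1_pow_three_mul_gaussPdf (hσ : σ ≠ 0) :
    ∫ x, score1 μ σ x ^ 3 * gaussPdf μ σ x = 0 := by
  have h (x : ℝ) : score1 μ σ x ^ 3 = ∑ i, ![0, 0, 0, 1] i / σ ^ 6 * (x - μ) ^ (i : ℕ) := by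
    simp only [score1, Fin.sum_univ_succ, Fin.sum_univ_zero, Matrix.cons_val_zero,
      Matrix.cons_val_succ, Fin.val_zero, Fin.val_succ]
    field_simp
    ring
  simp_rw [h, integral_sum_mul_gaussPdf hσ]
  simp [Fin.sum_univ_succ, gaussCentralMoment_three hσ]

lemma integral_score1_mul_score2_sq_mul_gaussPdf (hσ : σ ≠ 0) :
    ∫ x, score1 μ σ x * score2 μ σ x ^ 2 * gaussPdf μ σ x = 0 := by
  have h (x : ℝ) : score1 μ σ x * score2 μ σ x ^ 2
      = ∑ i, ![0, σ ^ 4, 0, -2 * σ ^ 2, 0, 1] i / (4 * σ ^ 10) * (x - μ) ^ (i : ℕ) := by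
    simp only [score1, score2, Fin.sum_univ_succ, Fin.sum_univ_zero, Matrix.cons_val_zero,
      Matrix.cons_val_succ, Fin.val_zero, Fin.val_succ]
    field_simp
    ring
  simp_rw [h, integral_sum_mul_gaussPdf hσ]
  simp [Fin.sum_univ_succ, gaussCentralMoment_one hσ, gaussCentralMoment_three hσ,
    gaussCentralMoment_five hσ]

lemma integral_score2_mul_score1_sq_mul_gaussPdf (hσ : 0 < σ) :
    ∫ x, score2 μ σ x * score1 μ σ x ^ 2 * gaussPdf μ σ x = 1 / σ ^ 4 := by
  have h (x : ℝ) : score2 μ σ x * score1 μ σ x ^ 2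
      = ∑ i, ![0, 0, -σ ^ 2, 0, 1] i / (2 * σ ^ 8) * (x - μ) ^ (i : ℕ) := by
    simp only [score1, score2, Fin.sum_univ_succ, Fin.sum_univ_zero, Matrix.cons_val_zero,
      Matrix.cons_val_succ, Fin.val_zero, Fin.val_succ]
    field_simp
    ring
  simp_rw [h, integral_sum_mul_gaussPdf hσ.ne']
  simp only [Fin.sum_univ_succ, Fin.sum_univ_zero, Matrix.cons_val_zero, Matrix.cons_val_succ,
    Fin.val_zero, Fin.val_succ, gaussCentralMoment_two hσ, gaussCentralMoment_four hσ]
  field_simp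
  ring

lemma integral_score2_pow_three_mul_gaussPdf (hσ : 0 < σ) :
    ∫ x, score2 μ σ x ^ 3 * gaussPdf μ σ x = 1 / σ ^ 6 := by
  have h (x : ℝ) : score2 μ σ x ^ 3 = ∑ i, ![-σ ^ 6, 0, 3 * σ ^ 4, 0, -3 * σ ^ 2, 0, 1] i
      / (8 * σ ^ 12) * (x - μ) ^ (i : ℕ) := by
    simp only [score2, Fin.sum_univ_succ, Fin.sum_univ_zero, Matrix.cons_val_zero,
      Matrix.cons_val_succ, Fin.val_zero, Fin.val_succ]
    field_simp
    ring
  simp_rw [h, integral_sum_mul_gaussPdf hσ.ne']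
  simp only [Fin.sum_univ_succ, Fin.sum_univ_zero, Matrix.cons_val_zero, Matrix.cons_val_succ,
    Fin.val_zero, Fin.val_succ, gaussCentralMoment_zero hσ, gaussCentralMoment_two hσ,
    gaussCentralMoment_four hσ, gaussCentralMoment_six hσ]
  field_simp
  ring

end

theorem gaussian_weyl_one_form (μ σ : ℝ) (hσ : 0 < σ) :
    (1 / 2) * ((∫ x : ℝ, score1 μ σ x ^ 3 * gaussPdf μ σ x) * σ ^ 2
        + (∫ x : ℝ, score1 μ σ x * score2 μ σ x ^ 2 * gaussPdf μ σ x) * (2 * σ ^ 4)) = 0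
    ∧ (1 / 2) * ((∫ x : ℝ, score2 μ σ x * score1 μ σ x ^ 2 * gaussPdf μ σ x) * σ ^ 2
        + (∫ x : ℝ, score2 μ σ x ^ 3 * gaussPdf μ σ x) * (2 * σ ^ 4)) = 3 / (2 * σ ^ 2) := by
  rw [integral_score1_pow_three_mul_gaussPdf hσ.ne',
    integral_score1_mul_score2_sq_mul_gaussPdf hσ.ne',
    integral_score2_mul_score1_sq_mul_gaussPdf hσ, integral_score2_pow_three_mul_gaussPdf hσ]
  refine ⟨by ring, ?_⟩
  field_simp
  ring
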